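/- arXiv:2405.03415 — 3 statements merged into one kernel-verified Lean document; each statement's English description precedes it below -/
import Mathlib

section
/- Discrete energy dissipation law for the second-order Lagrange-multiplier scheme (abstract form of Theorem 2.1): Let H be a real inner product space, let L be a self-adjoint continuous linear operator on H, let G be a continuous linear operator on H, let δt > 0, and let F̂ : H → ℝ be any function. Suppose elements φ⁺, φ, φ⁻, μ, w of H and a real number η satisfy (i) (φ⁺ − φ)/δt = −G μ, (ii) μ = L((3/4)·φ⁺ + (1/4)·φ⁻) + η·w, and (iii) F̂(φ⁺) − F̂(φ) = η·⟨w, φ⁺ − φ⟩. Define E⁺ = (1/2)⟨L φ⁺, φ⁺⟩ + (1/8)⟨L(φ⁺ − φ), φ⁺ − φ⟩ + F̂(φ⁺) and E = (1/2)⟨L φ, φ⟩ + (1/8)⟨L(φ − φ⁻), φ − φ⁻⟩ + F̂(φ). Then E⁺ − E = −δt·⟨G μ, μ⟩ − (1/8)·⟨L(φ⁺ − 2φ + φ⁻), φ⁺ − 2φ + φ⁻⟩. -/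
open RealInnerProductSpace

/-- Discrete energy dissipation law for the second-order Lagrange-multiplier
scheme (abstract form of Theorem 2.1). -/
theorem discrete_energy_dissipation_law
    {H : Type*} [NormedAddCommGroup H] [InnerProductSpace ℝ H]
    (L G : H →L[ℝ] H) (hL : ∀ x y : H, ⟪L x, y⟫ = ⟪x, L y⟫)
    (δt : ℝ) (hδt : 0 < δt) (Fhat : H → ℝ)
    (φp φ φm μ w : H) (η : ℝ)
    (h1 : δt⁻¹ • (φp - φ) = -(G μ))
    (h2 : μ = L ((3/4 : ℝ) • φp + (1/4 : ℝ) • φm) + η • w)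
    (h3 : Fhat φp - Fhat φ = η * ⟪w, φp - φ⟫) :
    ((1/2 : ℝ) * ⟪L φp, φp⟫ + (1/8 : ℝ) * ⟪L (φp - φ), φp - φ⟫ + Fhat φp)
      - ((1/2 : ℝ) * ⟪L φ, φ⟫ + (1/8 : ℝ) * ⟪L (φ - φm), φ - φm⟫ + Fhat φ)
    = -δt * ⟪G μ, μ⟫
      - (1/8 : ℝ) * ⟪L (φp - (2:ℝ) • φ + φm), φp - (2:ℝ) • φ + φm⟫ := by
  have sym : ∀ x y : H, ⟪L x, y⟫ = ⟪L y, x⟫ := fun x y =>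
    (hL x y).trans (real_inner_comm _ _)
  have hdiff : φp - φ = (-δt) • G μ := by
    have := congrArg (fun z : H => δt • z) h1
    simpa [smul_smul, mul_inv_cancel₀ hδt.ne', neg_smul] using this
  have key : ⟪μ, φp - φ⟫ = -δt * ⟪G μ, μ⟫ := by
    rw [hdiff, real_inner_smul_right, real_inner_comm]
  have hFa : Fhat φp - Fhat φ
      = ⟪μ, φp - φ⟫ - ⟪L ((3/4 : ℝ) • φp + (1/4 : ℝ) • φm), φp - φ⟫ := by
    rw [h3, h2, inner_add_left, real_inner_smul_left]; ring
  have hFp : Fhat φp = Fhat φ + ⟪μ, φp - φ⟫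
      - ⟪L ((3/4 : ℝ) • φp + (1/4 : ℝ) • φm), φp - φ⟫ := by linarith
  rw [hFp, key]
  simp only [map_add, map_sub, map_smul, inner_add_left, inner_add_right,
    inner_sub_left, inner_sub_right, real_inner_smul_left, real_inner_smul_right]
  rw [sym φ φp, sym φm φp, sym φm φ]
  ring
end

section
/- Unconditional energy stability of the second-order Lagrange-multiplier scheme (abstract form): Let H be a real inner product space, let L be a self-adjoint continuous linear operator on H with ⟨L x, x⟩ ≥ 0 for all x, let G be a continuous linear operator on H with ⟨G x, x⟩ ≥ 0 for all x, let δt > 0, and let F̂ : H → ℝ be any function. Suppose elements φ⁺, φ, φ⁻, μ, w of H and a real number η satisfy (i) (φ⁺ − φ)/δt = −G μ, (ii) μ = L((3/4)·φ⁺ + (1/4)·φ⁻) + η·w, and (iii) F̂(φ⁺) − F̂(φ) = η·⟨w, φ⁺ − φ⟩. Define E⁺ = (1/2)⟨L φ⁺, φ⁺⟩ + (1/8)⟨L(φ⁺ − φ), φ⁺ − φ⟩ + F̂(φ⁺) and E = (1/2)⟨L φ, φ⟩ + (1/8)⟨L(φ − φ⁻), φ − φ⁻⟩ + F̂(φ).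 Then E⁺ ≤ E. -/
open RealInnerProductSpace

/-- Unconditional energy stability of the second-order Lagrange-multiplier
scheme (abstract form). -/
theorem unconditional_energy_stability
    {H : Type*} [NormedAddCommGroup H] [InnerProductSpace ℝ H]
    (L G : H →L[ℝ] H) (hL : ∀ x y : H, ⟪L x, y⟫ = ⟪x, L y⟫)
    (hLpos : ∀ x : H, 0 ≤ ⟪L x, x⟫)
    (hGpos : ∀ x : H, 0 ≤ ⟪G x, x⟫)
    (δt : ℝ) (hδt : 0 < δt) (Fhat : H → ℝ)
    (φp φ φm μ w : H) (η : ℝ)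
    (h1 : δt⁻¹ • (φp - φ) = -(G μ))
    (h2 : μ = L ((3/4 : ℝ) • φp + (1/4 : ℝ) • φm) + η • w)
    (h3 : Fhat φp - Fhat φ = η * ⟪w, φp - φ⟫) :
    (1/2 : ℝ) * ⟪L φp, φp⟫ + (1/8 : ℝ) * ⟪L (φp - φ), φp - φ⟫ + Fhat φp
      ≤ (1/2 : ℝ) * ⟪L φ, φ⟫ + (1/8 : ℝ) * ⟪L (φ - φm), φ - φm⟫ + Fhat φ := by
  have hsym : ∀ x y : H, ⟪L x, y⟫ = ⟪L y, x⟫ := fun x y =>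
    (hL x y).trans (real_inner_comm _ _)
  -- φp - φ = -δt • G μ
  have hstep : φp - φ = (-δt) • G μ := by
    have := congrArg (fun x => δt • x) h1
    simpa [smul_smul, mul_inv_cancel₀ hδt.ne', neg_smul] using this
  have hkey : ⟪μ, φp - φ⟫ ≤ 0 := by
    rw [hstep, real_inner_smul_right, real_inner_comm]
    nlinarith [hGpos μ, hδt]
  have hmu : ⟪μ, φp - φ⟫ =
      (3/4 : ℝ) * ⟪L φp, φp - φ⟫ + (1/4 : ℝ) * ⟪L φm, φp - φ⟫
        + η * ⟪w, φp - φ⟫ := by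
    rw [h2, inner_add_left, map_add, map_smul, map_smul, inner_add_left,
      real_inner_smul_left, real_inner_smul_left, real_inner_smul_left]
  have hpos := hLpos (φp - (2:ℝ) • φ + φm)
  simp only [map_add, map_sub, map_smul, inner_add_left, inner_add_right,
    inner_sub_left, inner_sub_right, real_inner_smul_left,
    real_inner_smul_right] at hpos hmu h3 hkey ⊢
  simp only [hsym φ φp, hsym φm φp, hsym φ φm] at hpos hmu h3 hkey ⊢
  linarith [hkey, hmu, hpos, h3]
end

section
/- Refined estimate for the Lagrange multiplier (scalar core of the lemma giving |η^{n+1/2} − 1| ≤ (2A/γ)Δt²): Let g : ℝ → ℝ, let δ > 0, γ > 0 and A ≥ 0 satisfy (2A/γ)·δ² ≤ δ^{1/2}. Suppose g is differentiable at every point of the closed interval [1 − δ^{1/2}, 1 + δ^{1/2}] with g′(x) ≥ (γ/2)·δ for all x in this interval, and |g(1)| ≤ A·δ³. Then there exists a unique η ∈ [1 − δ^{1/2}, 1 + δ^{1/2}] with g(η) = 0, and this η satisfies |η − 1| ≤ (2A/γ)·δ². -/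
/-!
With slope at least `c = γδ/2`, over the radius `r = (2A/γ)δ²` the function `g` moves by at
least `c r = Aδ³ ≥ |g 1|`, so it changes sign on `[1 - r, 1 + r]`, which `hsmall` places inside
`[1 - √δ, 1 + √δ]`. Positivity of the derivative makes `g` strictly monotone there, hence the
zero is unique.
-/

open Set

theorem exists_eq_zero_mem_Icc_of_le_deriv {g : ℝ → ℝ} {a r c : ℝ} (hr : 0 ≤ r)
    (hcont : ContinuousOn g (Icc (a - r) (a + r)))
    (hdiff : DifferentiableOn ℝ g (Ioo (a - r) (a + r)))
    (hderiv : ∀ x ∈ Ioo (a - r) (a + r), c ≤ deriv g x)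
    (hga : |g a| ≤ c * r) :
    ∃ η ∈ Icc (a - r) (a + r), g η = 0 := by
  have ha : a ∈ Icc (a - r) (a + r) := ⟨by linarith, by linarith⟩
  have hmvt := (convex_Icc (a - r) (a + r)).mul_sub_le_image_sub_of_le_deriv hcont
    (by rwa [interior_Icc]) (by rwa [interior_Icc])
  have hright : 0 ≤ g (a + r) := by
    have h := hmvt a ha (a + r) (right_mem_Icc.2 (by linarith)) (by linarith)
    rw [add_sub_cancel_left] at h
    linarith [neg_abs_le (g a)]
  have hleft : g (a - r) ≤ 0 := by
    have h := hmvt (a - r) (left_mem_Icc.2 (by linarith)) a ha (by linarith)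
    rw [sub_sub_cancel] at h
    linarith [le_abs_self (g a)]
  exact intermediate_value_Icc (by linarith) hcont ⟨hleft, hright⟩

/-- Refined estimate for the Lagrange multiplier (scalar core of the lemma
giving `|η^{n+1/2} − 1| ≤ (2A/γ)Δt²`). -/
theorem lagrange_multiplier_refined_estimate
    (g : ℝ → ℝ) (δ γ A : ℝ) (hδ : 0 < δ) (hγ : 0 < γ) (hA : 0 ≤ A)
    (hsmall : (2 * A / γ) * δ ^ 2 ≤ Real.sqrt δ)
    (hdiff : ∀ x ∈ Set.Icc (1 - Real.sqrt δ) (1 + Real.sqrt δ),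
      DifferentiableAt ℝ g x)
    (hderiv : ∀ x ∈ Set.Icc (1 - Real.sqrt δ) (1 + Real.sqrt δ),
      (γ / 2) * δ ≤ deriv g x)
    (hg1 : |g 1| ≤ A * δ ^ 3) :
    ∃ η : ℝ, (η ∈ Set.Icc (1 - Real.sqrt δ) (1 + Real.sqrt δ) ∧ g η = 0 ∧
        |η - 1| ≤ (2 * A / γ) * δ ^ 2) ∧
      ∀ η' : ℝ, η' ∈ Set.Icc (1 - Real.sqrt δ) (1 + Real.sqrt δ) → g η' = 0 →
        η' = η := by
  set r := (2 * A / γ) * δ ^ 2 with hr_def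
  have hr : 0 ≤ r := by positivity
  have hslope : (γ / 2) * δ * r = A * δ ^ 3 := by rw [hr_def]; field_simp
  have hsub : Icc (1 - r) (1 + r) ⊆ Icc (1 - √δ) (1 + √δ) :=
    Icc_subset_Icc (by linarith) (by linarith)
  have hcont : ContinuousOn g (Icc (1 - √δ) (1 + √δ)) := fun x hx =>
    (hdiff x hx).continuousAt.continuousWithinAt
  obtain ⟨η, hη, hgη⟩ := exists_eq_zero_mem_Icc_of_le_deriv hr (hcont.mono hsub)
    (fun x hx => (hdiff x (hsub (Ioo_subset_Icc_self hx))).differentiableWithinAt)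
    (fun x hx => hderiv x (hsub (Ioo_subset_Icc_self hx))) (hslope ▸ hg1)
  have hmono : StrictMonoOn g (Icc (1 - √δ) (1 + √δ)) :=
    strictMonoOn_of_deriv_pos (convex_Icc _ _) hcont fun x hx =>
      (by positivity : 0 < γ / 2 * δ).trans_le (hderiv x (interior_subset hx))
  exact ⟨η, ⟨hsub hη, hgη, abs_le.2 ⟨by linarith [hη.1], by linarith [hη.2]⟩⟩,
    fun η' hη' hgη' => hmono.injOn hη' (hsub hη) (hgη'.trans hgη.symm)⟩
end
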